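/- arXiv:2003.13946 — 2 statements merged into one kernel-verified Lean document; each statement's English description precedes it below -/
import Mathlib

section
/- Let α ∈ ℝ^d be rationally independent, ρ ∈ ℝ with 2ρ ≠ ⟨k,α⟩ mod ℤ for all k ∈ ℤ^d, and let D = diag(e^{2πiρ}, e^{-2πiρ}). If T : 𝕋^d → M₂(ℂ) is continuous and satisfies T(x+α) D = D T(x) for all x, then T(x) is a constant diagonal matrix. -/
/-!
Each entry `t` of `T` satisfies `t (x + α) = c * t x` with `c = 1`, `e^{4πiρ}` or `e^{-4πiρ}`.
Translation by `α` multiplies the `n`-th Fourier coefficient on the torus by `e^{2πi⟨n,α⟩}`, so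
that coefficient vanishes unless `c = e^{2πi⟨n,α⟩}`. For the off-diagonal entries this never
happens, for the diagonal ones only at `n = 0`, and a continuous function on the torus is
determined by its Fourier coefficients.
-/

open scoped Real
open Complex MeasureTheory

namespace UnitAddTorus

section FourierCoeff

variable {ι : Type*} [Fintype ι] {E : Type*} [NormedAddCommGroup E] [NormedSpace ℂ E]

/-- Mathlib defines `mFourierCoeff` through a file-local `MeasureSpace` instance on `UnitAddCircle`
(the Haar probability measure), not through the global `volume` of `AddCircle 1`. -/
lemma mFourierCoeff_eq_integral_haar (f : UnitAddTorus ι → E) (n : ι → ℤ) :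
    mFourierCoeff f n =
      ∫ t, mFourier (-n) t • f t ∂Measure.pi fun _ => AddCircle.haarAddCircle :=
  rfl

lemma mFourier_add_apply (n : ι → ℤ) (x y : UnitAddTorus ι) :
    mFourier n (x + y) = mFourier n x * mFourier n y := by
  simp only [mFourier, ContinuousMap.coe_mk, Pi.add_apply, fourier_apply, smul_add,
    AddCircle.toCircle_add, Circle.coe_mul, Finset.prod_mul_distrib]

lemma mFourierCoeff_comp_add_right (f : UnitAddTorus ι → E) (a : UnitAddTorus ι) (n : ι → ℤ) :
    mFourierCoeff (fun t => f (t + a)) n = mFourier n a • mFourierCoeff f n := by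
  rw [mFourierCoeff_eq_integral_haar, mFourierCoeff_eq_integral_haar,
    ← integral_add_right_eq_self (fun t => mFourier (-n) t • f t) a, ← integral_smul]
  congr 1 with t
  rw [mFourier_add_apply, smul_smul, ← mul_assoc, mul_right_comm, ← mFourier_add,
    add_neg_cancel, mFourier_zero, ContinuousMap.one_apply, one_mul]

lemma mFourierCoeff_const_smul (f : UnitAddTorus ι → E) (c : ℂ) (n : ι → ℤ) :
    mFourierCoeff (c • f) n = c • mFourierCoeff f n := by
  simp only [mFourierCoeff_eq_integral_haar, ← integral_smul, Pi.smul_apply, smul_comm c]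

lemma mFourierCoeff_zero_sub_const [CompleteSpace E] (f : C(UnitAddTorus ι, E)) (c : E) :
    mFourierCoeff (fun t => f t - c) 0 = mFourierCoeff f 0 - c := by
  simp only [mFourierCoeff_eq_integral_haar, neg_zero, mFourier_zero, ContinuousMap.one_apply,
    one_smul]
  rw [integral_sub (f.continuous.integrable_of_hasCompactSupport
      (HasCompactSupport.of_compactSpace _)) (integrable_const c),
    integral_const, probReal_univ, one_smul]

lemma mFourierCoeff_eq_zero_of_comp_add_right_eq_smul {f : UnitAddTorus ι → E}
    {a : UnitAddTorus ι} {c : ℂ} (hf : ∀ t, f (t + a) = c • f t) {n : ι → ℤ}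
    (hn : mFourier n a ≠ c) : mFourierCoeff f n = 0 := by
  have h := mFourierCoeff_comp_add_right f a n
  rw [funext hf, show (fun t => c • f t) = c • f from rfl, mFourierCoeff_const_smul,
    eq_comm, ← sub_eq_zero, ← sub_smul] at h
  exact (smul_eq_zero.mp h).resolve_left (sub_ne_zero.mpr hn)

lemma eq_zero_of_mFourierCoeff_eq_zero {f : C(UnitAddTorus ι, ℂ)}
    (hf : ∀ n, mFourierCoeff f n = 0) : f = 0 := by
  have h := hasSum_mFourier_series_of_summable (f := f)
    (by rw [show mFourierCoeff f = 0 from funext hf]; exact summable_zero)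
  refine h.unique ?_
  convert hasSum_zero with n
  ext
  simp [hf n]

theorem eq_zero_of_comp_add_right_eq_mul {f : C(UnitAddTorus ι, ℂ)} {a : UnitAddTorus ι}
    {c : ℂ} (hf : ∀ t, f (t + a) = c * f t) (hc : ∀ n, mFourier n a ≠ c) : f = 0 :=
  eq_zero_of_mFourierCoeff_eq_zero fun n =>
    mFourierCoeff_eq_zero_of_comp_add_right_eq_smul hf (hc n)

theorem eq_const_of_comp_add_right_eq {f : C(UnitAddTorus ι, ℂ)} {a : UnitAddTorus ι}
    (hf : ∀ t, f (t + a) = f t) (ha : ∀ n ≠ 0, mFourier n a ≠ 1) :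
    ∀ t, f t = mFourierCoeff f 0 := by
  set g : C(UnitAddTorus ι, ℂ) := f - ContinuousMap.const _ (mFourierCoeff f 0)
  have hg : g = 0 := by
    refine eq_zero_of_mFourierCoeff_eq_zero fun n => ?_
    obtain rfl | hn := eq_or_ne n 0
    · exact (mFourierCoeff_zero_sub_const f _).trans (sub_self _)
    · refine mFourierCoeff_eq_zero_of_comp_add_right_eq_smul (c := 1) (fun t => ?_) (ha n hn)
      simp [g, hf]
  exact fun t => sub_eq_zero.mp (DFunLike.congr_fun hg t)

end FourierCoeff

section Covering

variable {ι : Type*}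

def mk : C(ι → ℝ, UnitAddTorus ι) where
  toFun x i := x i
  continuous_toFun := continuous_pi fun i => continuous_quotient_mk'.comp (continuous_apply i)

lemma mk_add (x y : ι → ℝ) : mk (x + y) = mk x + mk y := rfl

lemma isQuotientMap_mk : Topology.IsQuotientMap (mk (ι := ι)) :=
  (IsOpenQuotientMap.piMap fun _ => QuotientAddGroup.isOpenQuotientMap_mk).isQuotientMap

lemma exists_int_of_mk_eq_mk {x y : ι → ℝ} (h : mk x = mk y) :
    ∃ m : ι → ℤ, x = y + fun i => (m i : ℝ) := by
  have hm : ∀ i, ∃ m : ℤ, x i = y i + m := fun i => by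
    have hi : ((x i - y i : ℝ) : UnitAddCircle) = 0 := by
      rw [AddCircle.coe_sub, sub_eq_zero]; exact congrFun h i
    obtain ⟨m, hm⟩ := (AddCircle.coe_eq_zero_iff (p := (1 : ℝ))).mp hi
    exact ⟨m, by rw [zsmul_one] at hm; linarith⟩
  choose m hm using hm
  exact ⟨m, funext hm⟩

lemma mFourier_mk [Fintype ι] (n : ι → ℤ) (x : ι → ℝ) :
    mFourier n (mk x) = exp (2 * π * I * (∑ i, (n i : ℝ) * x i : ℝ)) := by
  simp only [mFourier, mk, ContinuousMap.coe_mk, fourier_coe_apply, ← exp_sum]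
  push_cast
  rw [Finset.mul_sum]
  exact congrArg _ (Finset.sum_congr rfl fun i _ => by ring)

end Covering

end UnitAddTorus

open UnitAddTorus

def ZPeriodic {ι E : Type*} (f : (ι → ℝ) → E) : Prop :=
  ∀ x (m : ι → ℤ), f (x + fun i => (m i : ℝ)) = f x

lemma exp_two_pi_I_mul_ne {s t : ℝ} (h : ∀ j : ℤ, s ≠ t + j) :
    exp (2 * π * I * s) ≠ exp (2 * π * I * t) := by
  rw [Ne, exp_eq_exp_iff_exists_int]
  rintro ⟨j, hj⟩
  refine h j (Complex.ofReal_injective ?_)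
  push_cast
  exact mul_left_cancel₀ two_pi_I_ne_zero (hj.trans (by ring))

lemma eq_exp_sub_mul_of_mul_exp_eq {a b u v : ℂ} (h : a * exp u = exp v * b) :
    a = exp (v - u) * b := by
  rw [exp_sub, div_mul_eq_mul_div, ← h, mul_div_cancel_right₀ _ (exp_ne_zero u)]

lemma Matrix.apply_eq_exp_sub_mul_of_mul_diagonal_exp {n : Type*} [Fintype n] [DecidableEq n]
    {A B : Matrix n n ℂ} {w : n → ℂ}
    (h : A * Matrix.diagonal (fun i => exp (w i)) = Matrix.diagonal (fun i => exp (w i)) * B)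
    (i j : n) : A i j = exp (w i - w j) * B i j :=
  eq_exp_sub_mul_of_mul_exp_eq <| by
    simpa only [Matrix.mul_diagonal, Matrix.diagonal_mul] using congr_fun₂ h i j

namespace ZPeriodic

variable {ι : Type*} {E : Type*} [TopologicalSpace E] {f : (ι → ℝ) → E}

lemma exists_lift (hper : ZPeriodic f) (hf : Continuous f) :
    ∃ F : C(UnitAddTorus ι, E), ∀ x, F (mk x) = f x := by
  have hfactor : Function.FactorsThrough f mk := fun x y hxy => by
    obtain ⟨m, rfl⟩ := exists_int_of_mk_eq_mk hxy
    exact hper y m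
  exact ⟨isQuotientMap_mk.lift ⟨f, hf⟩ hfactor,
    DFunLike.congr_fun (isQuotientMap_mk.lift_comp ⟨f, hf⟩ hfactor)⟩

variable [Fintype ι] {g : (ι → ℝ) → ℂ} {α : ι → ℝ}

theorem eq_zero_of_add_eq_exp_mul (hper : ZPeriodic g) (hg : Continuous g) {t : ℝ}
    (h : ∀ x, g (x + α) = exp (2 * π * I * t) * g x)
    (ht : ∀ (n : ι → ℤ) (j : ℤ), ∑ i, (n i : ℝ) * α i ≠ t + j) : g = 0 := by
  obtain ⟨G, hG⟩ := hper.exists_lift hg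
  have hG0 : G = 0 := by
    refine eq_zero_of_comp_add_right_eq_mul (a := mk α) (c := exp (2 * π * I * t)) ?_ fun n => ?_
    · refine isQuotientMap_mk.surjective.forall.mpr fun x => ?_
      rw [← mk_add, hG, hG, h]
    · rw [mFourier_mk]
      exact exp_two_pi_I_mul_ne (ht n)
  funext x
  rw [← hG, hG0, ContinuousMap.zero_apply, Pi.zero_apply]

theorem eq_const_of_add_eq (hper : ZPeriodic g) (hg : Continuous g)
    (h : ∀ x, g (x + α) = g x)
    (hα : ∀ n : ι → ℤ, n ≠ 0 → ∀ j : ℤ, ∑ i, (n i : ℝ) * α i ≠ j) : ∀ x, g x = g 0 := by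
  obtain ⟨G, hG⟩ := hper.exists_lift hg
  have hGconst := eq_const_of_comp_add_right_eq (f := G) (a := mk α) ?_ fun n hn => ?_
  · intro x
    rw [← hG, ← hG, hGconst, hGconst]
  · refine isQuotientMap_mk.surjective.forall.mpr fun x => ?_
    rw [← mk_add, hG, hG, h]
  · rw [mFourier_mk]
    simpa only [ofReal_zero, mul_zero, exp_zero] using
      exp_two_pi_I_mul_ne (t := 0) (by simpa only [zero_add] using hα n hn)

end ZPeriodic

/-- if `T : 𝕋^d → M₂(ℂ)` is continuous and satisfies
`T(x+α) D = D T(x)` where `D = diag(e^{2πiρ}, e^{-2πiρ})` with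
`2ρ ≠ ⟨k,α⟩ mod ℤ` for all `k`, then `T` is a constant diagonal matrix. -/
theorem stmt2 {d : ℕ} (α : Fin d → ℝ) (ρ : ℝ)
    (hα : ∀ k : Fin d → ℤ, k ≠ 0 → ∀ j : ℤ, (∑ i, (k i : ℝ) * α i) ≠ j)
    (hρ : ∀ (k : Fin d → ℤ) (j : ℤ), 2 * ρ ≠ (∑ i, (k i : ℝ) * α i) + j)
    (D : Matrix (Fin 2) (Fin 2) ℂ)
    (hD : D = Matrix.diagonal ![Complex.exp (2 * π * I * ρ),
                                Complex.exp (-(2 * π * I * ρ))])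
    (T : (Fin d → ℝ) → Matrix (Fin 2) (Fin 2) ℂ)
    (hT : Continuous T)
    (hper : ∀ (x : Fin d → ℝ) (m : Fin d → ℤ), T (x + fun i => (m i : ℝ)) = T x)
    (heq : ∀ x, T (x + α) * D = D * T x) :
    ∃ a b : ℂ, ∀ x, T x = Matrix.diagonal ![a, b] := by
  subst hD
  set w : Fin 2 → ℂ := ![2 * π * I * ρ, -(2 * π * I * ρ)]
  have hentry (x) (i j : Fin 2) : T (x + α) i j = exp (w i - w j) * T x i j := by
    refine Matrix.apply_eq_exp_sub_mul_of_mul_diagonal_exp ?_ i j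
    convert heq x using 3 <;> ext k <;> fin_cases k <;> rfl
  have hperiodic (i j : Fin 2) : ZPeriodic fun x => T x i j := fun x m => congr_fun₂ (hper x m) i j
  have hcont (i j : Fin 2) : Continuous fun x => T x i j := hT.matrix_elem i j
  have hdiag : ∀ i x, T x i i = T 0 i i := fun i =>
    (hperiodic i i).eq_const_of_add_eq (hcont i i)
      (fun x => by rw [hentry, sub_self, exp_zero, one_mul]) hα
  have h01 : (fun x => T x 0 1) = 0 :=
    (hperiodic 0 1).eq_zero_of_add_eq_exp_mul (hcont 0 1) (t := 2 * ρ)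
      (fun x => by rw [hentry]; congr 2; simp only [w]; push_cast; ring)
      (fun n j h => hρ n (-j) (by push_cast; linarith))
  have h10 : (fun x => T x 1 0) = 0 :=
    (hperiodic 1 0).eq_zero_of_add_eq_exp_mul (hcont 1 0) (t := -(2 * ρ))
      (fun x => by rw [hentry]; congr 2; simp only [w]; push_cast; ring)
      (fun n j h => hρ (-n) j (by
        simp only [Pi.neg_apply, Int.cast_neg, neg_mul, Finset.sum_neg_distrib]
        linarith))
  refine ⟨T 0 0 0, T 0 1 1, fun x => ?_⟩
  ext i j
  fin_cases i <;> fin_cases j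
  · exact hdiag 0 x
  · exact congr_fun h01 x
  · exact congr_fun h10 x
  · exact hdiag 1 x
end

section
/- Let u : ℤ^d → ℂ be the sequence of Fourier coefficients (shifted by ℓ ∈ ℤ^d) of z ∈ L²(𝕋^d,ℂ), i.e., u(n) = ẑ(n), where z satisfies the twisted cohomological equation (E − V(x)) z(x) = e^{−2πiθ} z(x−α) + e^{2πiθ} z(x+α) almost everywhere on 𝕋^d, with V ∈ L²(𝕋^d,ℝ) having Fourier coefficients V̂_k. Then u satisfies the long-range eigenvalue equation Σ_{k∈ℤ^d} V̂_k u(n−k) + 2cos 2π(θ + ⟨n,α⟩) u(n) = E u(n) for all n ∈ ℤ^d, provided V has absolutely summable Fourier coefficients so that the convolution converges. -/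
/-!
Multiply the cohomological equation by `exp (-2πi⟨n, x⟩)` and integrate over the unit box.
The box is, up to a null set, a fundamental domain of `ℤ^d`, and so are its translates; hence
integrals of `ℤ^d`-periodic functions over the box are translation invariant, and the shifted
terms `z (x ∓ α)` contribute `exp (∓2πi⟨n, α⟩) ẑ(n)`, which together with the phases `exp (∓2πiθ)`
give `2 cos 2π(θ + ⟨n, α⟩) ẑ(n)`. On the other side `V` is an absolutely convergent Fourier
series, the bound `‖V̂ₖ exp (2πi⟨k, x⟩) z(x)‖ ≤ ‖V̂ₖ‖ ‖z(x)‖` with `∑ₖ ‖V̂ₖ‖ < ∞` justifies exchanging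
sum and integral, and the Fourier coefficients of `V z` are the convolution `∑ₖ V̂ₖ ẑ(n - k)`.
-/

open scoped Real
open Complex MeasureTheory

/-- the unit box `[0,1]^d`, a fundamental domain of `𝕋^d` -/
def unitBox (d : ℕ) : Set (Fin d → ℝ) := Set.univ.pi fun _ => Set.Icc 0 1

section

open scoped Pointwise
open Submodule (span)

variable {d : ℕ}

instance : IsProbabilityMeasure (volume.restrict (unitBox d)) :=
  ⟨by simp [unitBox, Real.volume_Icc_pi]⟩

abbrev intLattice (d : ℕ) : AddSubgroup (Fin d → ℝ) :=
  (span ℤ (Set.range (Pi.basisFun ℝ (Fin d)))).toAddSubgroup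

instance : Countable (intLattice d) :=
  inferInstanceAs (Countable (span ℤ (Set.range (Pi.basisFun ℝ (Fin d)))))

lemma exists_intCast_eq_of_mem_intLattice {v : Fin d → ℝ} (hv : v ∈ intLattice d) :
    ∃ m : Fin d → ℤ, v = fun i => (m i : ℝ) := by
  choose m hm using ((Pi.basisFun ℝ (Fin d)).mem_span_iff_repr_mem ℤ v).1 hv
  exact ⟨m, funext fun i => by simpa using (hm i).symm⟩

local notation "𝔻" => ZSpan.fundamentalDomain (Pi.basisFun ℝ (Fin d))

lemma unitBox_ae_eq_fundamentalDomain : unitBox d =ᵐ[volume] 𝔻 := by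
  rw [ZSpan.fundamentalDomain_pi_basisFun]
  exact Measure.ae_eq_set_pi fun _ _ => Ico_ae_eq_Icc.symm

lemma isAddFundamentalDomain_preimage_add_left (c : Fin d → ℝ) :
    IsAddFundamentalDomain (intLattice d) ((c + ·) ⁻¹' 𝔻) volume := by
  rw [show (c + ·) ⁻¹' 𝔻 = -c +ᵥ 𝔻 from Set.preimage_vadd c _]
  exact (ZSpan.isAddFundamentalDomain' _ volume).vadd_of_comm (-c)

def IntPeriodic {E : Type*} (F : (Fin d → ℝ) → E) : Prop :=
  ∀ (x : Fin d → ℝ) (m : Fin d → ℤ), F (x + fun i => (m i : ℝ)) = F x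

namespace IntPeriodic

variable {E : Type*} {F : (Fin d → ℝ) → E}

lemma vadd_intLattice (hF : IntPeriodic F) (g : intLattice d) (x : Fin d → ℝ) :
    F (g +ᵥ x) = F x := by
  obtain ⟨m, hm⟩ := exists_intCast_eq_of_mem_intLattice g.2
  rw [AddSubgroup.vadd_def, vadd_eq_add, add_comm, hm, hF]

lemma comp_add_left (hF : IntPeriodic F) (c : Fin d → ℝ) : IntPeriodic fun x => F (c + x) :=
  fun x m => by simpa only [add_assoc] using hF (c + x) m

variable [NormedAddCommGroup E]

lemma integrableOn_unitBox_comp_add_right (hF : IntPeriodic F)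
    (hFi : IntegrableOn F (unitBox d)) (c : Fin d → ℝ) :
    IntegrableOn (fun x => F (x + c)) (unitBox d) := by
  have h𝔻 := ZSpan.isAddFundamentalDomain' (Pi.basisFun ℝ (Fin d)) volume
  simp only [add_comm _ c]
  rw [integrableOn_congr_set_ae unitBox_ae_eq_fundamentalDomain] at hFi ⊢
  rw [h𝔻.integrableOn_iff (isAddFundamentalDomain_preimage_add_left c)
    (hF.comp_add_left c).vadd_intLattice]
  exact ((measurePreserving_add_left volume c).integrableOn_comp_preimage
    (measurableEmbedding_addLeft c)).2 hFi

variable [NormedSpace ℝ E]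

lemma setIntegral_unitBox_comp_add_right (hF : IntPeriodic F) (c : Fin d → ℝ) :
    ∫ x in unitBox d, F (x + c) = ∫ x in unitBox d, F x := by
  have h𝔻 := ZSpan.isAddFundamentalDomain' (Pi.basisFun ℝ (Fin d)) volume
  simp only [add_comm _ c, setIntegral_congr_set unitBox_ae_eq_fundamentalDomain]
  calc ∫ x in 𝔻, F (c + x)
      = ∫ x in (c + ·) ⁻¹' 𝔻, F (c + x) :=
        h𝔻.setIntegral_eq (isAddFundamentalDomain_preimage_add_left c)
          (hF.comp_add_left c).vadd_intLattice
    _ = ∫ x in 𝔻, F x :=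
        (measurePreserving_add_left volume c).setIntegral_preimage_emb
          (measurableEmbedding_addLeft c) F _

end IntPeriodic

noncomputable def torusChar (n : Fin d → ℤ) (x : Fin d → ℝ) : ℂ :=
  exp (2 * π * I * ∑ i, (n i : ℝ) * x i)

lemma torusChar_zero_left (x : Fin d → ℝ) : torusChar 0 x = 1 := by
  simp [torusChar]

lemma torusChar_add_left (n m : Fin d → ℤ) (x : Fin d → ℝ) :
    torusChar (n + m) x = torusChar n x * torusChar m x := by
  simp only [torusChar, ← Complex.exp_add, Pi.add_apply, Int.cast_add, add_mul,
    Finset.sum_add_distrib]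
  push_cast
  ring_nf

lemma torusChar_add_right (n : Fin d → ℤ) (x y : Fin d → ℝ) :
    torusChar n (x + y) = torusChar n x * torusChar n y := by
  simp only [torusChar, ← Complex.exp_add, Pi.add_apply, mul_add, Finset.sum_add_distrib]
  push_cast
  ring_nf

lemma torusChar_neg_left (n : Fin d → ℤ) (x : Fin d → ℝ) :
    torusChar (-n) x = exp (-(2 * π * I * ∑ i, (n i : ℝ) * x i)) := by
  simp [torusChar, Finset.sum_neg_distrib]

lemma torusChar_neg_right (n : Fin d → ℤ) (x : Fin d → ℝ) :
    torusChar n (-x) = exp (-(2 * π * I * ∑ i, (n i : ℝ) * x i)) := by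
  simp [torusChar, Finset.sum_neg_distrib]

lemma torusChar_intCast (n m : Fin d → ℤ) : torusChar n (fun i => (m i : ℝ)) = 1 := by
  rw [torusChar, show (∑ i, (n i : ℝ) * (m i : ℝ)) = ((∑ i, n i * m i : ℤ) : ℝ) by push_cast; rfl]
  simpa [mul_comm] using Complex.exp_int_mul_two_pi_mul_I (∑ i, n i * m i)

lemma norm_torusChar (n : Fin d → ℤ) (x : Fin d → ℝ) : ‖torusChar n x‖ = 1 := by
  rw [torusChar, Complex.norm_exp]
  simp

@[fun_prop]
lemma continuous_torusChar (n : Fin d → ℤ) : Continuous (torusChar n) := by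
  unfold torusChar
  fun_prop

lemma intPeriodic_torusChar (n : Fin d → ℤ) : IntPeriodic (torusChar n) := fun x m => by
  rw [torusChar_add_right, torusChar_intCast, mul_one]

lemma IntPeriodic.mul {f g : (Fin d → ℝ) → ℂ} (hf : IntPeriodic f) (hg : IntPeriodic g) :
    IntPeriodic fun x => f x * g x :=
  fun x m => congrArg₂ (· * ·) (hf x m) (hg x m)

noncomputable def fourierCoeffBox (f : (Fin d → ℝ) → ℂ) (n : Fin d → ℤ) : ℂ :=
  ∫ x in unitBox d, f x * torusChar (-n) x

section FourierCoeff

variable {f g : (Fin d → ℝ) → ℂ}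

lemma MeasureTheory.IntegrableOn.mul_torusChar (hf : IntegrableOn f (unitBox d))
    (n : Fin d → ℤ) : IntegrableOn (fun x => f x * torusChar n x) (unitBox d) :=
  Integrable.mul_bdd hf (continuous_torusChar n).aestronglyMeasurable
    (ae_of_all _ fun x => (norm_torusChar n x).le)

lemma fourierCoeffBox_congr_ae (h : f =ᵐ[volume.restrict (unitBox d)] g) (n : Fin d → ℤ) :
    fourierCoeffBox f n = fourierCoeffBox g n :=
  integral_congr_ae (h.mono fun x hx => by simp only [hx])

lemma fourierCoeffBox_add (hf : IntegrableOn f (unitBox d)) (hg : IntegrableOn g (unitBox d))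
    (n : Fin d → ℤ) :
    fourierCoeffBox (fun x => f x + g x) n = fourierCoeffBox f n + fourierCoeffBox g n := by
  simp only [fourierCoeffBox, add_mul]
  exact integral_add (hf.mul_torusChar _) (hg.mul_torusChar _)

lemma fourierCoeffBox_sub (hf : IntegrableOn f (unitBox d)) (hg : IntegrableOn g (unitBox d))
    (n : Fin d → ℤ) :
    fourierCoeffBox (fun x => f x - g x) n = fourierCoeffBox f n - fourierCoeffBox g n := by
  simp only [fourierCoeffBox, sub_mul]
  exact integral_sub (hf.mul_torusChar _) (hg.mul_torusChar _)

lemma fourierCoeffBox_const_mul (c : ℂ) (n : Fin d → ℤ) :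
    fourierCoeffBox (fun x => c * f x) n = c * fourierCoeffBox f n := by
  simp only [fourierCoeffBox, mul_assoc]
  exact integral_const_mul c _

lemma IntPeriodic.fourierCoeffBox_comp_add_right (hf : IntPeriodic f) (c : Fin d → ℝ)
    (n : Fin d → ℤ) :
    fourierCoeffBox (fun x => f (x + c)) n = torusChar n c * fourierCoeffBox f n := by
  have hshift : ∀ x, f (x + c) * torusChar (-n) x
      = torusChar n c * (f (x + c) * torusChar (-n) (x + c)) := fun x => by
    have hc : torusChar n c * torusChar (-n) c = 1 := by
      rw [← torusChar_add_left, add_neg_cancel, torusChar_zero_left]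
    rw [torusChar_add_right]
    linear_combination -(f (x + c) * torusChar (-n) x) * hc
  simp only [fourierCoeffBox, hshift, integral_const_mul,
    (hf.mul (intPeriodic_torusChar (-n))).setIntegral_unitBox_comp_add_right]

variable {a : (Fin d → ℤ) → ℂ}

lemma norm_tsum_mul_torusChar_le (ha : Summable fun k => ‖a k‖) (x : Fin d → ℝ) :
    ‖∑' k, a k * torusChar k x‖ ≤ ∑' k, ‖a k‖ := by
  refine (norm_tsum_le_tsum_norm ?_).trans_eq (tsum_congr fun k => ?_) <;>
    simp only [norm_mul, norm_torusChar, mul_one, ha]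

lemma MeasureTheory.IntegrableOn.tsum_torusChar_mul (ha : Summable fun k => ‖a k‖)
    (hf : IntegrableOn f (unitBox d)) :
    IntegrableOn (fun x => (∑' k, a k * torusChar k x) * f x) (unitBox d) := by
  refine Integrable.bdd_mul hf (Continuous.aestronglyMeasurable ?_)
    (ae_of_all _ (norm_tsum_mul_torusChar_le ha))
  exact continuous_tsum (fun k => (continuous_torusChar k).const_mul _) ha
    fun k x => by rw [norm_mul, norm_torusChar, mul_one]

lemma fourierCoeffBox_tsum_torusChar_mul (ha : Summable fun k => ‖a k‖)
    (hf : IntegrableOn f (unitBox d)) (n : Fin d → ℤ) :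
    fourierCoeffBox (fun x => (∑' k, a k * torusChar k x) * f x) n
      = ∑' k, a k * fourierCoeffBox f (n - k) := by
  have hterm : ∀ k x, a k * torusChar k x * f x * torusChar (-n) x
      = a k * (f x * torusChar (-(n - k)) x) := fun k x => by
    rw [neg_sub, sub_eq_add_neg, torusChar_add_left]
    ring
  have hint : ∀ k, Integrable (fun x => a k * (f x * torusChar (-(n - k)) x))
      (volume.restrict (unitBox d)) := fun k => (hf.mul_torusChar _).const_mul (a k)
  have hnorm : ∀ k, ∫ x in unitBox d, ‖a k * (f x * torusChar (-(n - k)) x)‖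
      = ‖a k‖ * ∫ x in unitBox d, ‖f x‖ := fun k => by
    simp only [norm_mul, norm_torusChar, mul_one, integral_const_mul]
  simp only [fourierCoeffBox, ← tsum_mul_right, hterm, ← integral_const_mul]
  exact (integral_tsum_of_summable_integral_norm hint
    (by simpa only [hnorm] using ha.mul_right _)).symm

end FourierCoeff

lemma exp_mul_torusChar_neg_add_exp_mul_torusChar (θ : ℝ) (n : Fin d → ℤ) (α : Fin d → ℝ) :
    exp (-(2 * π * I * θ)) * torusChar n (-α) + exp (2 * π * I * θ) * torusChar n α
      = 2 * Real.cos (2 * π * (θ + ∑ i, (n i : ℝ) * α i)) := by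
  rw [torusChar_neg_right, torusChar, ← Complex.exp_add, ← Complex.exp_add, Complex.ofReal_cos,
    Complex.cos]
  push_cast
  ring_nf

end

/-- Aubry duality computation.  If `z ∈ L²(𝕋^d)` satisfies the
twisted cohomological equation
`(E − V(x)) z(x) = e^{−2πiθ} z(x−α) + e^{2πiθ} z(x+α)` a.e., where `V` has
absolutely summable Fourier coefficients `V̂`, then the Fourier coefficients
`u(n) = ẑ(n)` of `z` satisfy the long-range eigenvalue equation
`Σ_k V̂_k u(n−k) + 2cos 2π(θ+⟨n,α⟩) u(n) = E u(n)`. -/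
theorem stmt11 {d : ℕ} (α : Fin d → ℝ) (θ E : ℝ)
    (Vhat : (Fin d → ℤ) → ℂ) (hVhat : Summable fun k => ‖Vhat k‖)
    (V : (Fin d → ℝ) → ℝ)
    (hV : ∀ x, (V x : ℂ) = ∑' k : Fin d → ℤ,
      Vhat k * Complex.exp (2 * π * I * (∑ i, (k i : ℝ) * x i)))
    (z : (Fin d → ℝ) → ℂ)
    (hz : MeasureTheory.MemLp z 2 (volume.restrict (unitBox d)))
    (hzper : ∀ (x : Fin d → ℝ) (m : Fin d → ℤ), z (x + fun i => (m i : ℝ)) = z x)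
    (heq : ∀ᵐ x ∂(volume.restrict (unitBox d)),
      ((E : ℂ) - V x) * z x
        = Complex.exp (-(2 * π * I * θ)) * z (x - α)
          + Complex.exp (2 * π * I * θ) * z (x + α))
    (u : (Fin d → ℤ) → ℂ)
    (hu : ∀ n, u n = ∫ x in unitBox d,
      z x * Complex.exp (-(2 * π * I * (∑ i, (n i : ℝ) * x i)))) :
    ∀ n : Fin d → ℤ,
      (∑' k : Fin d → ℤ, Vhat k * u (n - k))
        + 2 * Real.cos (2 * π * (θ + ∑ i, (n i : ℝ) * α i)) * u n
      = E * u n := by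
  intro n
  obtain rfl : u = fourierCoeffBox z := funext fun m => by
    simpa only [fourierCoeffBox, torusChar_neg_left] using hu m
  have hzper : IntPeriodic z := hzper
  have hzi : IntegrableOn z (unitBox d) := hz.integrable one_le_two
  have hV : ∀ x, (V x : ℂ) = ∑' k, Vhat k * torusChar k x := hV
  have hlhs : fourierCoeffBox (fun x => ((E : ℂ) - V x) * z x) n
      = E * fourierCoeffBox z n - ∑' k, Vhat k * fourierCoeffBox z (n - k) := by
    simp only [sub_mul, hV]
    rw [fourierCoeffBox_sub (hzi.const_mul _) (hzi.tsum_torusChar_mul hVhat),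
      fourierCoeffBox_const_mul, fourierCoeffBox_tsum_torusChar_mul hVhat hzi]
  have hrhs : fourierCoeffBox (fun x => exp (-(2 * π * I * θ)) * z (x - α)
        + exp (2 * π * I * θ) * z (x + α)) n
      = 2 * Real.cos (2 * π * (θ + ∑ i, (n i : ℝ) * α i)) * fourierCoeffBox z n := by
    simp only [sub_eq_add_neg]
    rw [fourierCoeffBox_add ((hzper.integrableOn_unitBox_comp_add_right hzi _).const_mul _)
        ((hzper.integrableOn_unitBox_comp_add_right hzi _).const_mul _),
      fourierCoeffBox_const_mul, fourierCoeffBox_const_mul, hzper.fourierCoeffBox_comp_add_right,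
      hzper.fourierCoeffBox_comp_add_right, ← exp_mul_torusChar_neg_add_exp_mul_torusChar]
    ring
  linear_combination hlhs - hrhs - fourierCoeffBox_congr_ae heq n
end
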